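/- arXiv:2501.06382 — 3 statements merged into one kernel-verified Lean document; each statement's English description precedes it below -/
import Mathlib

section
/- Fix T ∈ ℕ, a finite set V, a subset H ⊆ V of size l with l + 2 ≤ |V|, a real p ∈ (0,1), and probabilities (q_v)_{v ∈ V} with q_v = p for v ∈ H, Σ_v q_v = 1 and 0 < q_v ≤ p for v ∉ H. There exists a coupling of T i.i.d. samples from the distribution q and from a distribution q' in which H is enlarged by one element w ∉ H (with q'_v = p for v ∈ H ∪ {w}, and q'_v ≤ q_v for v ∉ H ∪ {w}), such that the counts satisfy N(v) = N'(v) for v ∈ H, N(w) ≤ N'(w), and N(v) ≥ N'(v) for v ∉ H ∪ {w}. -/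
/-!
Couple one draw from `q` with one from `q'` by keeping the outcome `a` with weight
`min (q a) (q' a)` and sending the excess `q a - q' a` to `w`. The first coordinate has law `q`.
Since `q' ≤ q` away from `w`, the second coordinate has law `q'` off `w`, hence everywhere.
Only outcomes with `q' a < q a` are moved, and those lie outside `H ∪ {w}`; so in `T` independent
copies of this pair every occurrence of a token of `H` is kept, occurrences of `w` can only be
gained, and occurrences of the other tokens can only be lost.
-/

open MeasureTheory

namespace PMF

variable {α β : Type*}

theorem ext_of_forall_ne {p p' : PMF α} (w : α) (h : ∀ a ≠ w, p a = p' a) : p = p' := by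
  classical
  ext a
  obtain rfl | ha := eq_or_ne a w
  · have hsplit (r : PMF α) : r a + ∑' x, (if x = a then 0 else r x) = 1 := by
      rw [← ENNReal.tsum_eq_add_tsum_ite, r.tsum_coe]
    have hrest : ∑' x, (if x = a then 0 else p x) = ∑' x, (if x = a then 0 else p' x) :=
      tsum_congr fun x => by split_ifs with hx; exacts [rfl, h x hx]
    have hfin : ∑' x, (if x = a then 0 else p' x) ≠ ⊤ :=
      ne_top_of_le_ne_top ENNReal.one_ne_top (le_add_self.trans_eq (hsplit p'))
    rw [← ENNReal.add_left_inj hfin, ← hrest, hsplit, hrest, hsplit]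
  · exact h a ha

theorem map_fst_apply (μ : PMF (α × β)) (a : α) : μ.map Prod.fst a = ∑' b, μ (a, b) := by
  rw [map_apply, ENNReal.tsum_prod', tsum_eq_single a fun a' h => by simp [Ne.symm h]]
  simp

theorem map_snd_apply (μ : PMF (α × β)) (b : β) : μ.map Prod.snd b = ∑' a, μ (a, b) := by
  rw [map_apply, ENNReal.tsum_prod', ENNReal.tsum_comm,
    tsum_eq_single b fun b' h => by simp [Ne.symm h]]
  simp

theorem ae_mem_support [MeasurableSpace α] [MeasurableSingletonClass α] (p : PMF α) :
    ∀ᵐ x ∂p.toMeasure, x ∈ p.support := by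
  rw [← p.restrict_toMeasure_support]
  exact ae_restrict_mem p.support_countable.measurableSet

variable [DecidableEq α]

theorem tsum_excessTo_row (q q' : PMF α) (w a : α) :
    ∑' b, ((if b = w then q a - q' a else 0) + if b = a then min (q a) (q' a) else 0) = q a := by
  rw [ENNReal.tsum_add, tsum_ite_eq, tsum_ite_eq, tsub_add_min]

noncomputable def excessTo (q q' : PMF α) (w : α) : PMF (α × α) :=
  ⟨fun x => (if x.2 = w then q x.1 - q' x.1 else 0) + if x.2 = x.1 then min (q x.1) (q' x.1) else 0,
    ENNReal.summable.hasSum_iff.mpr <| by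
      rw [ENNReal.tsum_prod']
      simp only [tsum_excessTo_row, q.tsum_coe]⟩

variable {q q' : PMF α} {w : α}

theorem excessTo_apply (x : α × α) : q.excessTo q' w x =
    (if x.2 = w then q x.1 - q' x.1 else 0) + if x.2 = x.1 then min (q x.1) (q' x.1) else 0 :=
  rfl

theorem map_fst_excessTo : (q.excessTo q' w).map Prod.fst = q := by
  ext a
  simp only [map_fst_apply, excessTo_apply, tsum_excessTo_row]

theorem map_snd_excessTo (h : ∀ a ≠ w, q' a ≤ q a) : (q.excessTo q' w).map Prod.snd = q' := by
  refine ext_of_forall_ne w fun b hb => ?_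
  rw [map_snd_apply, tsum_eq_single b fun a ha => by simp [excessTo_apply, hb, Ne.symm ha]]
  simp [excessTo_apply, hb, h b hb]

theorem eq_or_lt_of_mem_support_excessTo {x : α × α} (hx : x ∈ (q.excessTo q' w).support) :
    x.2 = x.1 ∨ (x.2 = w ∧ q' x.1 < q x.1) := by
  rw [mem_support_iff, excessTo_apply] at hx
  refine (eq_or_ne x.2 x.1).imp id fun hne => ?_
  simpa only [hne, if_false, add_zero, ne_eq, ite_eq_right_iff, tsub_eq_zero_iff_le, not_forall,
    not_le, exists_prop] using hx

end PMF

namespace MeasureTheory.Measure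

variable {α β ι : Type*} [MeasurableSpace α] [MeasurableSpace β] [Fintype ι]

noncomputable def piUnzip (μ : Measure (α × β)) (ι : Type*) [Fintype ι] :
    Measure ((ι → α) × (ι → β)) :=
  (Measure.pi fun _ : ι => μ).map (MeasurableEquiv.arrowProdEquivProdArrow α β ι)

variable (μ : Measure (α × β))

instance [IsProbabilityMeasure μ] : IsProbabilityMeasure (μ.piUnzip ι) :=
  isProbabilityMeasure_map (MeasurableEquiv.measurable _).aemeasurable

theorem map_fst_piUnzip [IsFiniteMeasure μ] :
    (μ.piUnzip ι).map Prod.fst = Measure.pi fun _ : ι => μ.map Prod.fst := by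
  rw [piUnzip, map_map measurable_fst (MeasurableEquiv.measurable _)]
  exact pi_map_pi fun _ => measurable_fst.aemeasurable

theorem map_snd_piUnzip [IsFiniteMeasure μ] :
    (μ.piUnzip ι).map Prod.snd = Measure.pi fun _ : ι => μ.map Prod.snd := by
  rw [piUnzip, map_map measurable_snd (MeasurableEquiv.measurable _)]
  exact pi_map_pi fun _ => measurable_snd.aemeasurable

variable {μ}

theorem ae_piUnzip [SigmaFinite μ] {P : α × β → Prop} (h : ∀ᵐ x ∂μ, P x) :
    ∀ᵐ z ∂μ.piUnzip ι, ∀ i, P (z.1 i, z.2 i) := by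
  rw [piUnzip, (MeasurableEquiv.measurableEmbedding _).ae_map_iff]
  exact ae_all_iff.mpr fun i => tendsto_eval_ae_ae.eventually h

end MeasureTheory.Measure

theorem card_filter_eq_and_mono_of_move_to {ι α : Type*} [Fintype ι] [DecidableEq α]
    {H : Finset α} {w : α} (hw : w ∉ H) {x y : ι → α}
    (hxy : ∀ i, y i = x i ∨ (y i = w ∧ x i ∉ H)) :
    (∀ v ∈ H, (Finset.univ.filter fun i => x i = v).card =
      (Finset.univ.filter fun i => y i = v).card) ∧
    (Finset.univ.filter fun i => x i = w).card ≤ (Finset.univ.filter fun i => y i = w).card ∧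
    ∀ v ∉ insert w H, (Finset.univ.filter fun i => y i = v).card ≤
      (Finset.univ.filter fun i => x i = v).card := by
  refine ⟨fun v hv => ?_, Finset.card_le_card <| Finset.monotone_filter_right _ fun i _ hi => ?_,
    fun v hv => Finset.card_le_card <| Finset.monotone_filter_right _ fun i _ hi => ?_⟩
  · refine congrArg Finset.card <| Finset.filter_congr fun i _ => ?_
    rcases hxy i with h | ⟨hyw, hxH⟩
    · rw [h]
    · exact iff_of_false (by rintro rfl; exact hxH hv) (by rintro rfl; exact hw (hyw ▸ hv))
  · rcases hxy i with h | ⟨hyw, -⟩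
    · exact h.trans hi
    · exact hyw
  · rcases hxy i with h | ⟨hyw, -⟩
    · exact h.symm.trans hi
    · rw [← hi, hyw] at hv
      exact absurd (Finset.mem_insert_self w H) hv

theorem coupling_exists_general {V : Type*} [DecidableEq V]
    [MeasurableSpace V] [MeasurableSingletonClass V]
    (T : ℕ) (H : Finset V)
    (p : ENNReal)
    (q q' : PMF V) (w : V) (hw : w ∉ H)
    (hqH : ∀ v ∈ H, q v = p)
    (hq'H : ∀ v ∈ insert w H, q' v = p)
    (hq'out : ∀ v ∉ insert w H, q' v ≤ q v) :
    ∃ ν : Measure ((Fin T → V) × (Fin T → V)), IsProbabilityMeasure ν ∧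
      ν.map Prod.fst = (Measure.pi fun _ : Fin T => q.toMeasure) ∧
      ν.map Prod.snd = (Measure.pi fun _ : Fin T => q'.toMeasure) ∧
      ν {ωp : (Fin T → V) × (Fin T → V) |
          (∀ v ∈ H, (Finset.univ.filter fun i => ωp.1 i = v).card =
                    (Finset.univ.filter fun i => ωp.2 i = v).card) ∧
          (Finset.univ.filter fun i => ωp.1 i = w).card ≤
            (Finset.univ.filter fun i => ωp.2 i = w).card ∧
          (∀ v ∉ insert w H, (Finset.univ.filter fun i => ωp.2 i = v).card ≤
            (Finset.univ.filter fun i => ωp.1 i = v).card)} = 1 := by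
  have hle : ∀ v ≠ w, q' v ≤ q v := fun v hv => by
    by_cases hvH : v ∈ H
    · rw [hqH v hvH, hq'H v (Finset.mem_insert_of_mem hvH)]
    · exact hq'out v (by simp [hv, hvH])
  have hmoved : ∀ᵐ x ∂(q.excessTo q' w).toMeasure, x.2 = x.1 ∨ (x.2 = w ∧ x.1 ∉ H) := by
    filter_upwards [(q.excessTo q' w).ae_mem_support] with x hx
    refine (PMF.eq_or_lt_of_mem_support_excessTo hx).imp_right
      fun ⟨hxw, hlt⟩ => ⟨hxw, fun hxH => ?_⟩
    rw [hqH _ hxH, hq'H _ (Finset.mem_insert_of_mem hxH)] at hlt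
    exact lt_irrefl p hlt
  refine ⟨(q.excessTo q' w).toMeasure.piUnzip (Fin T), inferInstance, ?_, ?_, ?_⟩
  · rw [Measure.map_fst_piUnzip, PMF.toMeasure_map _ _ measurable_fst, PMF.map_fst_excessTo]
  · rw [Measure.map_snd_piUnzip, PMF.toMeasure_map _ _ measurable_snd, PMF.map_snd_excessTo hle]
  · have hcounts := (Measure.ae_piUnzip (ι := Fin T) hmoved).mono
      fun z hz => card_filter_eq_and_mono_of_move_to hw hz
    exact (measure_congr (ae_eq_univ.mpr (ae_iff.mp hcounts))).trans measure_univ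

/-- Coupling construction: given a distribution `q` assigning probability `p` to each
token of `H` and at most `p` elsewhere, and a distribution `q'` obtained by raising the
probability of one extra token `w ∉ H` to `p` (lowering only other tokens outside
`H ∪ {w}`), there is a coupling of `T` i.i.d. samples from `q` and `q'` under which,
almost surely, the counts agree on `H`, the count of `w` does not decrease, and the
counts of all other tokens do not increase. -/
theorem coupling_exists {V : Type*} [Fintype V] [DecidableEq V]
    [MeasurableSpace V] [MeasurableSingletonClass V]
    (T : ℕ) (H : Finset V) (hl : H.card + 2 ≤ Fintype.card V)
    (p : ENNReal) (hp0 : 0 < p) (hp1 : p < 1)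
    (q q' : PMF V) (w : V) (hw : w ∉ H)
    (hqH : ∀ v ∈ H, q v = p)
    (hqout : ∀ v ∉ H, 0 < q v ∧ q v ≤ p)
    (hq'H : ∀ v ∈ insert w H, q' v = p)
    (hq'out : ∀ v ∉ insert w H, q' v ≤ q v) :
    ∃ ν : Measure ((Fin T → V) × (Fin T → V)), IsProbabilityMeasure ν ∧
      ν.map Prod.fst = (Measure.pi fun _ : Fin T => q.toMeasure) ∧
      ν.map Prod.snd = (Measure.pi fun _ : Fin T => q'.toMeasure) ∧
      ν {ωp : (Fin T → V) × (Fin T → V) |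
          (∀ v ∈ H, (Finset.univ.filter fun i => ωp.1 i = v).card =
                    (Finset.univ.filter fun i => ωp.2 i = v).card) ∧
          (Finset.univ.filter fun i => ωp.1 i = w).card ≤
            (Finset.univ.filter fun i => ωp.2 i = w).card ∧
          (∀ v ∉ insert w H, (Finset.univ.filter fun i => ωp.2 i = v).card ≤
            (Finset.univ.filter fun i => ωp.1 i = v).card)} = 1 :=
  coupling_exists_general T H p q q' w hw hqH hq'H hq'out
end

section
/- Let V be a finite type, and consider two probability mass functions q, q' on V such that q'(v) ≥ q(v) for all v in a set S and q'(v) ≤ q(v) for all v ∉ S. Partition [0,1) into intervals assigned to tokens so that interval lengths equal the probabilities, with the intervals for S placed first in both layouts and nested appropriately. Then for U uniform on [0,1), the induced tokens Y = f_q(U) and Y' = f_{q'}(U) satisfy: Y ∈ S implies Y' = Y. -/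
/-!
Both layouts start with the same block `[0, s)`, `s = ∑_{v ∈ S} q v`, in which every `v ∈ S`
receives a piece of length `q v`. After it, `q` lays out its mass off `S`, while `q'` lays out
the surplus `q' - q` on `S` and its mass off `S`. A point of `[0, 1)` sent by `f` to `S` lies in
the common block, where `f` and `g` agree.
-/

open MeasureTheory

section Layout

open Set

variable {ι : Type*}

/-- The positivity clause keeps a layout off the tokens of weight zero, which the measure
condition alone cannot do. -/
def IsLayout (f : ℝ → ι) (w : ι → ℝ) (a b : ℝ) : Prop :=
  (∀ u ∈ Ico a b, 0 < w (f u)) ∧ ∀ i, volume (Ico a b ∩ f ⁻¹' {i}) = ENNReal.ofReal (w i)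

theorem isLayout_const [DecidableEq ι] (j : ι) (x a : ℝ) :
    IsLayout (fun _ => j) (Pi.single j x) a (a + x) := by
  refine ⟨fun u hu => ?_, fun i => ?_⟩
  · simpa using hu.1.trans_lt hu.2
  · by_cases hij : i = j
    · subst hij
      simp [Real.volume_Ico]
    · simp [Ne.symm hij, hij]

theorem IsLayout.concat {f₀ f₁ : ℝ → ι} {w₀ w₁ : ι → ℝ} {a b c : ℝ}
    (h₀ : IsLayout f₀ w₀ a b) (h₁ : IsLayout f₁ w₁ b c) (hw₀ : 0 ≤ w₀) (hw₁ : 0 ≤ w₁)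
    (hab : a ≤ b) (hbc : b ≤ c) :
    IsLayout (fun u => if u < b then f₀ u else f₁ u) (w₀ + w₁) a c := by
  refine ⟨fun u hu => ?_, fun i => ?_⟩
  · by_cases hub : u < b
    · simpa [hub] using add_pos_of_pos_of_nonneg (h₀.1 u ⟨hu.1, hub⟩) (hw₁ (f₀ u))
    · simpa [hub] using add_pos_of_nonneg_of_pos (hw₀ (f₁ u)) (h₁.1 u ⟨not_lt.1 hub, hu.2⟩)
  · set F : ℝ → ι := fun u => if u < b then f₀ u else f₁ u
    have hleft : Ico a c ∩ F ⁻¹' {i} ∩ Iio b = Ico a b ∩ f₀ ⁻¹' {i} := by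
      ext u
      simp only [F, mem_inter_iff, mem_Ico, mem_preimage, mem_singleton_iff, mem_Iio]
      constructor
      · rintro ⟨⟨⟨hau, -⟩, hu⟩, hub⟩
        exact ⟨⟨hau, hub⟩, by simpa [hub] using hu⟩
      · rintro ⟨⟨hau, hub⟩, hu⟩
        exact ⟨⟨⟨hau, hub.trans_le hbc⟩, by simpa [hub] using hu⟩, hub⟩
    have hright : (Ico a c ∩ F ⁻¹' {i}) \ Iio b = Ico b c ∩ f₁ ⁻¹' {i} := by
      ext u
      simp only [F, mem_sdiff, mem_inter_iff, mem_Ico, mem_preimage, mem_singleton_iff,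
        mem_Iio, not_lt]
      constructor
      · rintro ⟨⟨⟨-, huc⟩, hu⟩, hbu⟩
        exact ⟨⟨hbu, huc⟩, by simpa [not_lt.2 hbu] using hu⟩
      · rintro ⟨⟨hbu, huc⟩, hu⟩
        exact ⟨⟨⟨hab.trans hbu, huc⟩, by simpa [not_lt.2 hbu] using hu⟩, hbu⟩
    rw [← measure_inter_add_sdiff _ measurableSet_Iio, hleft, hright, h₀.2, h₁.2,
      Pi.add_apply, ENNReal.ofReal_add (hw₀ i) (hw₁ i)]

theorem exists_isLayout_of_support_subset [Nonempty ι] {s : Finset ι} {w : ι → ℝ}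
    (hw : 0 ≤ w) (hs : ∀ i ∉ s, w i = 0) (a : ℝ) :
    ∃ f, IsLayout f w a (a + ∑ i ∈ s, w i) := by
  classical
  induction s using Finset.induction_on generalizing w a with
  | empty =>
    refine ⟨fun _ => Classical.arbitrary ι, by simp, fun i => ?_⟩
    simp [hs i (Finset.notMem_empty i)]
  | insert j s hj ih =>
    set w' := Function.update w j 0
    have hw' : 0 ≤ w' := fun i => by
      by_cases hij : i = j
      · simp [w', hij]
      · simpa [w', hij] using hw i
    have hs' : ∀ i ∉ s, w' i = 0 := fun i hi => by
      by_cases hij : i = j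
      · simp [w', hij]
      · simp [w', hij, hs i (by simp [hij, hi])]
    have hsum : ∑ i ∈ s, w' i = ∑ i ∈ s, w i :=
      Finset.sum_congr rfl fun i hi => Function.update_of_ne (ne_of_mem_of_not_mem hi hj) _ _
    have hsplit : Pi.single j (w j) + w' = w := by
      ext i
      by_cases hij : i = j <;> simp [w', hij]
    obtain ⟨f', hf'⟩ := ih hw' hs' (a + w j)
    have h := (isLayout_const j (w j) a).concat hf' (Pi.single_nonneg.2 (hw j)) hw'
      (le_add_of_nonneg_right (hw j)) (le_add_of_nonneg_right (Finset.sum_nonneg fun i _ => hw' i))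
    rw [hsplit, hsum, add_assoc, ← Finset.sum_insert hj] at h
    exact ⟨_, h⟩

theorem exists_isLayout [Fintype ι] [Nonempty ι] {w : ι → ℝ} (hw : 0 ≤ w) (a : ℝ) :
    ∃ f, IsLayout f w a (a + ∑ i, w i) :=
  exists_isLayout_of_support_subset hw (fun i hi => absurd (Finset.mem_univ i) hi) a

theorem IsLayout.exists_extension [Fintype ι] [Nonempty ι] {f₀ : ℝ → ι} {p w : ι → ℝ} {a : ℝ}
    (h₀ : IsLayout f₀ p a (a + ∑ i, p i)) (hp : 0 ≤ p) (hpw : p ≤ w) :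
    ∃ f, IsLayout f w a (a + ∑ i, w i) ∧ EqOn f f₀ (Ico a (a + ∑ i, p i)) ∧
      ∀ u ∈ Ico (a + ∑ i, p i) (a + ∑ i, w i), p (f u) < w (f u) := by
  have hwp : 0 ≤ w - p := sub_nonneg.2 hpw
  obtain ⟨f₁, h₁⟩ := exists_isLayout hwp (a + ∑ i, p i)
  have hend : a + ∑ i, p i + ∑ i, (w - p) i = a + ∑ i, w i := by
    simp only [Pi.sub_apply, Finset.sum_sub_distrib]
    ring
  have h := h₀.concat h₁ hp hwp (le_add_of_nonneg_right (Finset.sum_nonneg fun i _ => hp i))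
    (le_add_of_nonneg_right (Finset.sum_nonneg fun i _ => hwp i))
  rw [add_sub_cancel, hend] at h
  rw [hend] at h₁
  refine ⟨_, h, fun u hu => if_pos hu.2, fun u hu => ?_⟩
  simpa [not_lt.2 hu.1] using h₁.1 u hu

end Layout

theorem inverse_cdf_coupling_general {V : Type*} [Fintype V]
    (q q' : V → ℝ) (hq0 : ∀ v, 0 ≤ q v) (hq'0 : ∀ v, 0 ≤ q' v)
    (hqsum : ∑ v, q v = 1) (hq'sum : ∑ v, q' v = 1)
    (S : Finset V)
    (hS : ∀ v ∈ S, q v ≤ q' v) :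
    ∃ f g : ℝ → V,
      (∀ v : V, volume (Set.Ico (0:ℝ) 1 ∩ f ⁻¹' {v}) = ENNReal.ofReal (q v)) ∧
      (∀ v : V, volume (Set.Ico (0:ℝ) 1 ∩ g ⁻¹' {v}) = ENNReal.ofReal (q' v)) ∧
      (∀ u ∈ Set.Ico (0:ℝ) 1, f u ∈ S → g u = f u) := by
  have : Nonempty V := Finset.univ_nonempty_iff.1 <|
    Finset.nonempty_of_sum_ne_zero (by rw [hqsum]; exact one_ne_zero)
  set p : V → ℝ := (S : Set V).indicator q
  have hp : 0 ≤ p := Set.indicator_nonneg fun v _ => hq0 v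
  have hpq : p ≤ q := Set.indicator_le_self' fun v _ => hq0 v
  have hpq' : p ≤ q' := fun v => by
    by_cases hv : v ∈ S
    · simpa [p, hv] using hS v hv
    · simpa [p, hv] using hq'0 v
  obtain ⟨f₀, hf₀⟩ := exists_isLayout hp 0
  obtain ⟨f, hf, hff₀, hf_off⟩ := hf₀.exists_extension hp hpq
  obtain ⟨g, hg, hgf₀, -⟩ := hf₀.exists_extension hp hpq'
  simp only [zero_add, hqsum] at hf hff₀ hf_off
  simp only [zero_add, hq'sum] at hg hgf₀
  refine ⟨f, g, hf.2, hg.2, fun u hu hfu => ?_⟩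
  by_cases hup : u < ∑ v, p v
  · rw [hgf₀ ⟨hu.1, hup⟩, hff₀ ⟨hu.1, hup⟩]
  · simpa [p, hfu] using hf_off u ⟨not_lt.1 hup, hu.2⟩

/-- Inverse-CDF coupling: if `q'` dominates `q` on `S` and is dominated by `q` off `S`,
there are layout maps `f, g : ℝ → V` assigning to each token a portion of `[0,1)` of
Lebesgue measure equal to its probability under `q` resp. `q'`, such that whenever the
token drawn under `q` lies in `S`, the token drawn under `q'` agrees with it. -/
theorem inverse_cdf_coupling {V : Type*} [Fintype V] [DecidableEq V]
    (q q' : V → ℝ) (hq0 : ∀ v, 0 ≤ q v) (hq'0 : ∀ v, 0 ≤ q' v)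
    (hqsum : ∑ v, q v = 1) (hq'sum : ∑ v, q' v = 1)
    (S : Finset V)
    (hS : ∀ v ∈ S, q v ≤ q' v) (hSc : ∀ v ∉ S, q' v ≤ q v) :
    ∃ f g : ℝ → V,
      (∀ v : V, volume (Set.Ico (0:ℝ) 1 ∩ f ⁻¹' {v}) = ENNReal.ofReal (q v)) ∧
      (∀ v : V, volume (Set.Ico (0:ℝ) 1 ∩ g ⁻¹' {v}) = ENNReal.ofReal (q' v)) ∧
      (∀ u ∈ Set.Ico (0:ℝ) 1, f u ∈ S → g u = f u) :=
  inverse_cdf_coupling_general q q' hq0 hq'0 hqsum hq'sum S hS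
end

section
/- Let (Ω, P) be a probability space and for each l ∈ ℕ let E_l be the event that in T i.i.d. draws from the distribution assigning probability p to each of tokens 1,…,l, probability q to token l+1, and arbitrary probabilities (each ≤ p, with q < p) to the remaining tokens of a set of size K, some token with index > l strictly outnumbers every token with index ≤ l. If l + 2 ≤ K and all the stated probability constraints hold for both parameters l and l+1 (with the distribution for l+1 obtained by raising token l+1's probability from q to p and reducing only probabilities of tokens with index ≥ l+2), then P(E_{l+1}) ≤ P(E_l). -/
/-!
Couple the `T` draws from `μ` and from `μ'` trial by trial: draw `x ∼ μ`, keep it with the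
mass that `μ'` also puts on `x`, and otherwise move it to token `l` (the paper's token `l + 1`;
tokens are indexed from `0` here). Only tokens with index `≥ l + 1` are ever moved, so in the
coupled samples the counts of tokens `< l` agree, the count of token `l` can only grow, and the
count of every token `≥ l + 1` can only shrink. Hence whenever the `μ'`-sample lies in the event
for `l + 1`, the `μ`-sample lies in the event for `l`.
-/

open MeasureTheory

section PiCoupling

variable {ι α β : Type*} [Fintype ι] [MeasurableSpace α] [MeasurableSpace β]

theorem MeasureTheory.Measure.pi_map_snd_le_pi_map_fst (ν : Measure (α × β)) [IsFiniteMeasure ν]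
    {R : α → β → Prop} (hR : ∀ᵐ z ∂ν, R z.1 z.2) {A : Set (ι → α)} {B : Set (ι → β)}
    (hB : MeasurableSet B) (hAB : ∀ x y, (∀ i, R (x i) (y i)) → y ∈ B → x ∈ A) :
    Measure.pi (fun _ : ι => ν.map Prod.snd) B ≤ Measure.pi (fun _ : ι => ν.map Prod.fst) A := by
  have hπR : ∀ᵐ σ ∂Measure.pi fun _ : ι => ν, ∀ i, R (σ i).1 (σ i).2 :=
    ae_all_iff.2 fun i => (Measure.quasiMeasurePreserving_eval (fun _ : ι => ν) i).ae hR
  rw [← Measure.pi_map_pi fun _ => measurable_snd.aemeasurable,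
    ← Measure.pi_map_pi fun _ => measurable_fst.aemeasurable, Measure.map_apply (by fun_prop) hB]
  calc _ ≤ (Measure.pi fun _ : ι => ν) ((fun σ i => (σ i).1) ⁻¹' A) :=
        measure_mono_ae <| hπR.mono fun σ hσ hσB => hAB _ _ hσ hσB
    _ ≤ _ := Measure.le_map_apply
        (by fun_prop : Measurable fun σ : ι → α × β => fun i => (σ i).1).aemeasurable _

end PiCoupling

section Relocation

variable {α : Type*} [MeasurableSpace α]

/-- When `ρ' ≤ ρ` away from `a₀` and the total masses agree, this is a coupling of `ρ` (first
marginal) and `ρ'` (second marginal): the part of `ρ` that `ρ'` also carries off `a₀` stays in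
place, and all the rest of `ρ` is moved to `a₀`. -/
noncomputable def relocationCoupling (ρ ρ' : Measure α) (a₀ : α) : Measure (α × α) :=
  (ρ'.restrict {a₀}ᶜ).map (fun x => (x, x)) + (ρ - ρ'.restrict {a₀}ᶜ).map (fun x => (x, a₀))

variable {ρ ρ' : Measure α} {a₀ : α}

instance [IsFiniteMeasure ρ] [IsFiniteMeasure ρ'] :
    IsFiniteMeasure (relocationCoupling ρ ρ' a₀) := by
  unfold relocationCoupling; infer_instance

theorem relocationCoupling_map_fst [IsFiniteMeasure ρ'] (h : ρ'.restrict {a₀}ᶜ ≤ ρ) :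
    (relocationCoupling ρ ρ' a₀).map Prod.fst = ρ := by
  rw [relocationCoupling, Measure.map_add _ _ measurable_fst,
    Measure.map_map measurable_fst (by fun_prop), Measure.map_map measurable_fst (by fun_prop)]
  simp only [Function.comp_def, Measure.map_id']
  exact (add_comm _ _).trans (Measure.sub_add_cancel_of_le h)

theorem relocationCoupling_map_snd [MeasurableSingletonClass α] [IsFiniteMeasure ρ']
    (h : ρ'.restrict {a₀}ᶜ ≤ ρ) (huniv : ρ Set.univ = ρ' Set.univ) :
    (relocationCoupling ρ ρ' a₀).map Prod.snd = ρ' := by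
  have hsplit : ρ' Set.univ = ρ'.restrict {a₀}ᶜ Set.univ + ρ' {a₀} := by
    rw [Measure.restrict_apply_univ, add_comm,
      measure_add_measure_compl (measurableSet_singleton a₀)]
  have hmoved : (ρ - ρ'.restrict {a₀}ᶜ) Set.univ = ρ' {a₀} := by
    rw [Measure.sub_apply MeasurableSet.univ h, huniv, hsplit,
      ENNReal.add_sub_cancel_left (measure_ne_top _ _)]
  rw [relocationCoupling, Measure.map_add _ _ measurable_snd,
    Measure.map_map measurable_snd (by fun_prop), Measure.map_map measurable_snd (by fun_prop)]
  simp only [Function.comp_def, Measure.map_id', Measure.map_const, hmoved]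
  conv_rhs => rw [← Measure.restrict_add_restrict_compl (measurableSet_singleton a₀) (μ := ρ')]
  rw [add_comm, Measure.restrict_singleton]

theorem ae_relocationCoupling [Countable α] [MeasurableSingletonClass α] [IsFiniteMeasure ρ']
    (h : ρ'.restrict {a₀}ᶜ ≤ ρ) {S : Set α} (ha₀ : a₀ ∉ S) (hS : ρ S ≤ ρ' S) :
    ∀ᵐ z ∂relocationCoupling ρ ρ' a₀, z.2 = z.1 ∨ (z.2 = a₀ ∧ z.1 ∉ S) := by
  have hnull : (ρ - ρ'.restrict {a₀}ᶜ) S = 0 := by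
    rw [Measure.sub_apply S.to_countable.measurableSet h,
      Measure.restrict_apply' (measurableSet_singleton a₀).compl,
      Set.inter_eq_left.2 (Set.subset_compl_singleton_iff.2 ha₀)]
    exact tsub_eq_zero_of_le hS
  rw [relocationCoupling, ae_add_measure_iff,
    ae_map_iff (by fun_prop) (Set.to_countable _).measurableSet,
    ae_map_iff (by fun_prop) (Set.to_countable _).measurableSet]
  exact ⟨ae_of_all _ fun _ => Or.inl rfl,
    (measure_eq_zero_iff_ae_notMem.1 hnull).mono fun _ hx => Or.inr ⟨rfl, hx⟩⟩

end Relocation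

namespace PMF

variable {α : Type*} [MeasurableSpace α] [MeasurableSingletonClass α] {p q : PMF α}

theorem toMeasure_apply_le_of_forall_le {s : Set α} (h : ∀ x ∈ s, p x ≤ q x) :
    p.toMeasure s ≤ q.toMeasure s := by
  simp only [toMeasure_apply_eq_tsum]
  exact ENNReal.tsum_le_tsum fun x => Set.indicator_le_indicator' (h x)

theorem restrict_compl_singleton_toMeasure_le {a₀ : α} (h : ∀ x, x ≠ a₀ → q x ≤ p x) :
    q.toMeasure.restrict {a₀}ᶜ ≤ p.toMeasure :=
  Measure.le_iff.2 fun s hs => by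
    rw [Measure.restrict_apply hs]
    exact (toMeasure_apply_le_of_forall_le fun x hx => h x hx.2).trans
      (measure_mono Set.inter_subset_left)

end PMF

section Counting

variable {ι α : Type*} [Fintype ι] [DecidableEq α] {ω ω' : ι → α} {a₀ : α}

theorem card_filter_eq_of_relocated {S : Set α} (h : ∀ i, ω' i = ω i ∨ (ω' i = a₀ ∧ ω i ∉ S))
    (ha₀ : a₀ ∉ S) {u : α} (hu : u ∈ S) :
    (Finset.univ.filter fun i => ω i = u).card = (Finset.univ.filter fun i => ω' i = u).card := by
  refine congrArg _ (Finset.filter_congr fun i _ => ⟨fun hωi => ?_, fun hω'i => ?_⟩)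
  · rcases h i with h' | ⟨-, hS⟩
    · rw [h', hωi]
    · exact absurd (hωi ▸ hu) hS
  · rcases h i with h' | ⟨h', -⟩
    · rw [← h', hω'i]
    · exact absurd (h' ▸ hω'i ▸ hu) ha₀

theorem card_filter_le_of_relocated (h : ∀ i, ω' i = ω i ∨ ω' i = a₀) {v : α} (hv : v ≠ a₀) :
    (Finset.univ.filter fun i => ω' i = v).card ≤ (Finset.univ.filter fun i => ω i = v).card := by
  refine Finset.card_le_card fun i => ?_
  simp only [Finset.mem_filter, Finset.mem_univ, true_and]
  intro hω'i
  rcases h i with h' | h'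
  · rw [← h', hω'i]
  · exact absurd (h' ▸ hω'i).symm hv

end Counting

theorem event_prob_monotone_general (K : ℕ) (l : ℕ) (hl : l + 2 ≤ K)
    [MeasurableSpace (Fin K)] [MeasurableSingletonClass (Fin K)]
    (p : ENNReal)
    (μ μ' : PMF (Fin K))
    (hμp : ∀ v : Fin K, v.val < l → μ v = p)
    (hμ'p : ∀ v : Fin K, v.val < l + 1 → μ' v = p)
    (hμ'le : ∀ v : Fin K, l + 1 ≤ v.val → μ' v ≤ μ v)
    (T : ℕ) :
    (Measure.pi fun _ : Fin T => μ'.toMeasure)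
        {ω : Fin T → Fin K | ∃ v : Fin K, l + 1 ≤ v.val ∧
          ∀ u : Fin K, u.val < l + 1 →
            (Finset.univ.filter fun i => ω i = u).card <
            (Finset.univ.filter fun i => ω i = v).card} ≤
    (Measure.pi fun _ : Fin T => μ.toMeasure)
        {ω : Fin T → Fin K | ∃ v : Fin K, l ≤ v.val ∧
          ∀ u : Fin K, u.val < l →
            (Finset.univ.filter fun i => ω i = u).card <
            (Finset.univ.filter fun i => ω i = v).card} := by
  set a₀ : Fin K := ⟨l, by omega⟩
  set S : Set (Fin K) := {u | u.val < l}
  have ha₀S : a₀ ∉ S := lt_irrefl l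
  have hμ'_le_μ : ∀ x, x ≠ a₀ → μ' x ≤ μ x := by
    intro x hx
    have hxl : x.val ≠ l := fun h => hx (Fin.ext h)
    by_cases hxS : x.val < l
    · rw [hμp x hxS, hμ'p x (by omega)]
    · exact hμ'le x (by omega)
  have hcoup := PMF.restrict_compl_singleton_toMeasure_le hμ'_le_μ
  have hS : μ.toMeasure S ≤ μ'.toMeasure S :=
    PMF.toMeasure_apply_le_of_forall_le fun x hx =>
      ((hμp x hx).trans (hμ'p x (Nat.lt_succ_of_lt hx)).symm).le
  conv_lhs => rw [← relocationCoupling_map_snd hcoup (by simp)]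
  conv_rhs => rw [← relocationCoupling_map_fst hcoup]
  refine Measure.pi_map_snd_le_pi_map_fst _ (R := fun x y => y = x ∨ (y = a₀ ∧ x ∉ S))
    (ae_relocationCoupling hcoup ha₀S hS)
    (Set.to_countable _).measurableSet ?_
  rintro ω ω' hω ⟨v, hv, hv_wins⟩
  have hva₀ : v ≠ a₀ := fun h => by simp [h, a₀] at hv
  refine ⟨v, by omega, fun u hu => ?_⟩
  calc _ = (Finset.univ.filter fun i => ω' i = u).card :=
        card_filter_eq_of_relocated hω ha₀S hu
    _ < _ := hv_wins u (by omega)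
    _ ≤ _ := card_filter_le_of_relocated (fun i => (hω i).imp_right And.left) hva₀

/-- Monotonicity of the topic-change event probability in the size `l` of the
highest-priority class. The distribution `μ` gives probability `p` to each of the first
`l` tokens, `q < p` to token `l+1`, and at most `p` to every token; `μ'` is obtained by
raising token `l+1`'s probability to `p` and reducing only probabilities of tokens with
index ≥ `l+2`. Then the probability (under `T` i.i.d. draws) that some token outside the
first `l+1` strictly outnumbers each of the first `l+1` is at most the probability that
some token outside the first `l` strictly outnumbers each of the first `l`. -/
theorem event_prob_monotone (K : ℕ) (l : ℕ) (hl : l + 2 ≤ K)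
    [MeasurableSpace (Fin K)] [MeasurableSingletonClass (Fin K)]
    (p q : ENNReal) (hq : q < p) (hp1 : p < 1)
    (μ μ' : PMF (Fin K))
    (hμp : ∀ v : Fin K, v.val < l → μ v = p)
    (hμq : ∀ v : Fin K, v.val = l → μ v = q)
    (hμle : ∀ v : Fin K, μ v ≤ p)
    (hμ'p : ∀ v : Fin K, v.val < l + 1 → μ' v = p)
    (hμ'le : ∀ v : Fin K, l + 1 ≤ v.val → μ' v ≤ μ v)
    (T : ℕ) :
    (Measure.pi fun _ : Fin T => μ'.toMeasure)
        {ω : Fin T → Fin K | ∃ v : Fin K, l + 1 ≤ v.val ∧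
          ∀ u : Fin K, u.val < l + 1 →
            (Finset.univ.filter fun i => ω i = u).card <
            (Finset.univ.filter fun i => ω i = v).card} ≤
    (Measure.pi fun _ : Fin T => μ.toMeasure)
        {ω : Fin T → Fin K | ∃ v : Fin K, l ≤ v.val ∧
          ∀ u : Fin K, u.val < l →
            (Finset.univ.filter fun i => ω i = u).card <
            (Finset.univ.filter fun i => ω i = v).card} :=
  event_prob_monotone_general K l hl p μ μ' hμp hμ'p hμ'le T
end
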